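/- For α, β > 0, an element x ∈ ℓ² minimizes the elastic-net functional Φ_{α,β} if and only if βx = S_α(−K*(Kx − y)) componentwise, where S_α is the soft-shrinkage operator; equivalently, x = S_{α/β}(−K*(Kx − y)/β). -/

import Mathlib

noncomputable section

open Filter Topology

/-- `ℓ²(ℕ, ℝ)`. -/
abbrev ltwo : Type := lp (fun _ : ℕ => ℝ) 2

/-- `x ∈ ℓ¹`. -/
def inL1 (x : ltwo) : Prop := Memℓp (fun i => x i) 1

/-- The `ℓ¹`-norm `‖x‖_{ℓ¹} = ∑ |xᵢ|` (junk value if `x ∉ ℓ¹`). -/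
noncomputable def l1norm (x : ltwo) : ℝ := ∑' i, |x i|

/-- The elastic-net functional `Φ_{α,β}(x) = ½‖Kx − y‖² + α‖x‖₁ + (β/2)‖x‖₂²`,
real-valued on its effective domain `ℓ¹ ∩ ℓ²` (the convention `Φ = +∞` off `ℓ¹` is
implemented by restricting all statements to `inL1`). -/
noncomputable def Phi {H : Type*} [NormedAddCommGroup H] [InnerProductSpace ℝ H]
    (K : ltwo →L[ℝ] H) (y : H) (α β : ℝ) (x : ltwo) : ℝ :=
  (1 / 2) * ‖K x - y‖ ^ 2 + α * l1norm x + (β / 2) * ‖x‖ ^ 2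

/-- `x` is a minimizer of `Φ_{α,β}` over `ℓ²` (with the `+∞` convention off `ℓ¹`). -/
def IsMinimizer {H : Type*} [NormedAddCommGroup H] [InnerProductSpace ℝ H]
    (K : ltwo →L[ℝ] H) (y : H) (α β : ℝ) (x : ltwo) : Prop :=
  inL1 x ∧ ∀ z : ltwo, inL1 z → Phi K y α β x ≤ Phi K y α β z


/-- The scalar soft-shrinkage function `S_a(t) = sign(t)·max(|t| − a, 0)`. -/
noncomputable def soft (a t : ℝ) : ℝ := Real.sign t * max (|t| - a) 0

/-!
Expanding `Φ` around `x` gives `Φ z = Φ x + ⟪K*(Kx - y) + βx, z - x⟫ + α (‖z‖₁ - ‖x‖₁)` plus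
nonnegative quadratic terms, and the first-order part is a sum over coordinates. If every
coordinate satisfies the scalar subgradient inequality `-(K*(Kx - y))ᵢ - βxᵢ ∈ ∂(α|·|)(xᵢ)`, every
summand is nonnegative and `x` is a minimizer. Conversely, moving `x` in a single coordinate shows
that the convex function `t ↦ cᵢ t + α (|xᵢ + t| - |xᵢ|)` is bounded below by `-C t²`; by convexity
it is then nonnegative, which is the subgradient inequality. For `β > 0` that inequality says
exactly `βxᵢ = S_α(-(K*(Kx - y))ᵢ)`, and the bound `|S_α(w)| ≤ w² / α` puts such an `x` in `ℓ¹`.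
-/

open Set RealInnerProductSpace

theorem soft_of_abs_le {a w : ℝ} (h : |w| ≤ a) : soft a w = 0 := by
  rw [soft, max_eq_right (sub_nonpos.2 h), mul_zero]

theorem soft_of_lt {a w : ℝ} (ha : 0 ≤ a) (h : a < w) : soft a w = w - a := by
  rw [soft, Real.sign_of_pos (by linarith), abs_of_pos (by linarith),
    max_eq_left (by linarith), one_mul]

theorem soft_of_lt_neg {a w : ℝ} (ha : 0 ≤ a) (h : w < -a) : soft a w = w + a := by
  rw [soft, Real.sign_of_neg (by linarith), abs_of_neg (by linarith),
    max_eq_left (by linarith)]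
  ring

theorem abs_soft_le {a : ℝ} (ha : 0 < a) (w : ℝ) : |soft a w| ≤ w ^ 2 / a := by
  rw [le_div_iff₀ ha]
  rcases le_or_gt |w| a with h | h
  · rw [soft_of_abs_le h, abs_zero, zero_mul]; positivity
  rcases le_or_gt w 0 with hw | hw
  · rw [abs_of_nonpos hw] at h
    rw [soft_of_lt_neg ha.le (by linarith), abs_of_neg (by linarith)]
    nlinarith
  · rw [abs_of_pos hw] at h
    rw [soft_of_lt ha.le h, abs_of_pos (by linarith)]
    nlinarith

theorem eq_soft_iff {a v w : ℝ} (ha : 0 ≤ a) :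
    v = soft a w ↔ |w - v| ≤ a ∧ (w - v) * v = a * |v| := by
  constructor
  · rintro rfl
    rcases le_or_gt |w| a with h | h
    · simpa [soft_of_abs_le h] using h
    rcases le_or_gt w 0 with hw | hw
    · rw [abs_of_nonpos hw] at h
      rw [soft_of_lt_neg ha (by linarith), show w - (w + a) = -a by ring, abs_neg,
        abs_of_nonneg ha, abs_of_neg (by linarith : w + a < 0)]
      exact ⟨le_rfl, by ring⟩
    · rw [abs_of_pos hw] at h
      rw [soft_of_lt ha h, sub_sub_cancel, abs_of_nonneg ha, abs_of_pos (by linarith : 0 < w - a)]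
      exact ⟨le_rfl, by ring⟩
  · rintro ⟨hle, hv⟩
    rcases lt_trichotomy v 0 with hv0 | rfl | hv0
    · rw [abs_of_neg hv0] at hv
      have : w - v = -a := by nlinarith
      rw [soft_of_lt_neg ha (by linarith)]; linarith
    · rw [soft_of_abs_le (by simpa using hle)]
    · rw [abs_of_pos hv0] at hv
      have : w - v = a := by nlinarith
      rw [soft_of_lt ha (by linarith)]; linarith

theorem forall_abs_subgradient_iff {a c s : ℝ} :
    (∀ r, a * |s| + c * (r - s) ≤ a * |r|) ↔ |c| ≤ a ∧ c * s = a * |s| := by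
  constructor
  · intro h
    have h0 := h 0
    have h2 := h (2 * s)
    rw [abs_zero, mul_zero] at h0
    rw [abs_mul, abs_two] at h2
    have hcs : c * s = a * |s| := by linarith
    have h1 := h 1
    have h1' := h (-1)
    rw [abs_one] at h1
    rw [abs_neg, abs_one] at h1'
    exact ⟨abs_le.2 ⟨by linarith, by linarith⟩, hcs⟩
  · rintro ⟨hc, hcs⟩ r
    have : c * r ≤ a * |r| :=
      (le_abs_self _).trans (by rw [abs_mul]; exact mul_le_mul_of_nonneg_right hc (abs_nonneg r))
    linarith

theorem mul_eq_soft_iff {a b s w : ℝ} (ha : 0 ≤ a) (hb : 0 < b) :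
    b * s = soft a w ↔ ∀ r, a * |s| + (w - b * s) * (r - s) ≤ a * |r| := by
  rw [eq_soft_iff ha, forall_abs_subgradient_iff, abs_mul, abs_of_pos hb,
    show (w - b * s) * (b * s) = b * ((w - b * s) * s) by ring,
    show a * (b * |s|) = b * (a * |s|) by ring, mul_right_inj' hb.ne']

theorem Real.sign_div_of_pos {b : ℝ} (hb : 0 < b) (w : ℝ) : Real.sign (w / b) = Real.sign w := by
  rcases lt_trichotomy w 0 with hw | rfl | hw
  · rw [Real.sign_of_neg hw, Real.sign_of_neg (div_neg_of_neg_of_pos hw hb)]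
  · rw [zero_div]
  · rw [Real.sign_of_pos hw, Real.sign_of_pos (div_pos hw hb)]

theorem soft_div_div {b : ℝ} (hb : 0 < b) (a w : ℝ) : soft (a / b) (w / b) = soft a w / b := by
  rw [soft, soft, Real.sign_div_of_pos hb, abs_div, abs_of_pos hb, ← sub_div,
    ← zero_div b, max_div_div_right hb.le, zero_div, mul_div_assoc]

theorem ConvexOn.nonneg_of_nonneg_add_mul_norm_sq {E : Type*} [SeminormedAddCommGroup E]
    [NormedSpace ℝ E] {g : E → ℝ} (hg : ConvexOn ℝ univ g) (hg0 : g 0 = 0) {C : ℝ}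
    (h : ∀ v, 0 ≤ g v + C * ‖v‖ ^ 2) (v : E) : 0 ≤ g v := by
  have hscaled : ∀ l ∈ Ioc (0 : ℝ) 1, 0 ≤ g v + C * l * ‖v‖ ^ 2 := by
    rintro l ⟨hl0, hl1⟩
    have hconv : g (l • v) ≤ l * g v := by
      simpa [hg0] using hg.2 (mem_univ 0) (mem_univ v) (sub_nonneg.2 hl1) hl0.le (by ring)
    have hlv := h (l • v)
    rw [norm_smul, Real.norm_of_nonneg hl0.le] at hlv
    refine nonneg_of_mul_nonneg_right (a := l) ?_ hl0
    nlinarith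
  have hlim : Tendsto (fun l : ℝ => g v + C * l * ‖v‖ ^ 2) (𝓝[>] 0) (𝓝 (g v)) := by
    refine tendsto_nhdsWithin_of_tendsto_nhds ?_
    simpa using ((continuous_const.mul continuous_id).mul continuous_const).const_add (g v)
      |>.tendsto (0 : ℝ)
  exact ge_of_tendsto hlim (eventually_of_mem (Ioc_mem_nhdsGT one_pos) hscaled)

theorem convexOn_mul_add_abs (c s : ℝ) {a : ℝ} (ha : 0 ≤ a) :
    ConvexOn ℝ univ fun t => c * t + a * (|s + t| - |s|) := by
  have habs : ConvexOn ℝ univ fun t : ℝ => |s + t| := by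
    simpa [Function.comp_def] using (convexOn_univ_norm (E := ℝ)).translate_right s
  have hlin : ConvexOn ℝ univ fun t : ℝ => c * t := (LinearMap.mul ℝ ℝ c).convexOn convex_univ
  have hshift : ConvexOn ℝ univ fun t => a * (|s + t| - |s|) := by
    simpa [sub_eq_add_neg] using (habs.add_const (-|s|)).smul ha
  exact hlin.add hshift

theorem inL1_iff_summable {x : ltwo} : inL1 x ↔ Summable fun i => |x i| := by
  rw [inL1, memℓp_gen_iff (by simp)]
  simp [Real.norm_eq_abs]

theorem ltwo.summable_mul (f g : ltwo) : Summable fun i => f i * g i := by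
  simpa [mul_comm] using lp.summable_inner (𝕜 := ℝ) f g

theorem ltwo.inner_eq_tsum (f g : ltwo) : ⟪f, g⟫ = ∑' i, f i * g i := by
  simp [lp.inner_eq_tsum, mul_comm]

theorem ltwo.inner_single_right (f : ltwo) (i : ℕ) (t : ℝ) :
    ⟪f, lp.single 2 i t⟫ = f i * t := by
  simp [lp.inner_single_right, mul_comm]

theorem inL1_add_single {x : ltwo} (hx : inL1 x) (i : ℕ) (t : ℝ) :
    inL1 (x + lp.single 2 i t) := by
  have hsingle : Memℓp (Pi.single i t : ℕ → ℝ) 1 := (lp.single (E := fun _ : ℕ => ℝ) 1 i t).2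
  unfold inL1
  rw [lp.coeFn_add, lp.coeFn_single]
  exact hx.add hsingle

theorem l1norm_add_single {x : ltwo} (hx : inL1 x) (i : ℕ) (t : ℝ) :
    l1norm (x + lp.single 2 i t) = l1norm x + (|x i + t| - |x i|) := by
  have hcoord : ∀ j, |(x + lp.single 2 i t : ltwo) j|
      = |x j| + (Pi.single i (|x i + t| - |x i|) : ℕ → ℝ) j := by
    intro j
    rcases eq_or_ne j i with rfl | hj
    · simp
    · simp [hj]
  rw [l1norm, tsum_congr hcoord]
  exact ((inL1_iff_summable.1 hx).hasSum.add (hasSum_pi_single i _)).tsum_eq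

theorem inner_add_l1norm_sub_eq_tsum (c : ltwo) (a : ℝ) {x z : ltwo} (hx : inL1 x)
    (hz : inL1 z) :
    ⟪c, z - x⟫ + a * (l1norm z - l1norm x) = ∑' i, (c i * (z i - x i) + a * (|z i| - |x i|)) := by
  have hx' := inL1_iff_summable.1 hx
  have hz' := inL1_iff_summable.1 hz
  rw [ltwo.inner_eq_tsum, l1norm, l1norm, ← hz'.tsum_sub hx', ← tsum_mul_left,
    ← (ltwo.summable_mul c (z - x)).tsum_add ((hz'.sub hx').mul_left a)]
  simp

theorem inL1_of_forall_mul_eq_soft {α β : ℝ} (hα : 0 < α) (hβ : 0 < β) {x w : ltwo}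
    (h : ∀ i, β * x i = soft α (w i)) : inL1 x := by
  refine inL1_iff_summable.2 <| ((ltwo.summable_mul w w).div_const (α * β)).of_nonneg_of_le
    (fun i => abs_nonneg _) fun i => ?_
  calc |x i| = |β * x i| / β := by rw [abs_mul, abs_of_pos hβ, mul_div_cancel_left₀ _ hβ.ne']
    _ = |soft α (w i)| / β := by rw [h i]
    _ ≤ w i ^ 2 / α / β := by gcongr; exact abs_soft_le hα _
    _ = w i * w i / (α * β) := by rw [div_div, sq]

section ElasticNet

variable {H : Type*} [NormedAddCommGroup H] [InnerProductSpace ℝ H] [CompleteSpace H]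
  (K : ltwo →L[ℝ] H) (y : H) (α β : ℝ)

theorem Phi_eq_add (x z : ltwo) :
    Phi K y α β z = Phi K y α β x + ⟪ContinuousLinearMap.adjoint K (K x - y) + β • x, z - x⟫
      + α * (l1norm z - l1norm x) + 1 / 2 * ‖K (z - x)‖ ^ 2 + β / 2 * ‖z - x‖ ^ 2 := by
  have hKz : K z - y = (K x - y) + K (z - x) := by rw [map_sub]; abel
  have hz : ‖z‖ ^ 2 = ‖x‖ ^ 2 + 2 * ⟪x, z - x⟫ + ‖z - x‖ ^ 2 := by
    simpa using norm_add_sq_real x (z - x)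
  rw [inner_add_left, ContinuousLinearMap.adjoint_inner_left, real_inner_smul_left, Phi, Phi,
    hKz, norm_add_sq_real, hz]
  ring

theorem Phi_le_add (x z : ltwo) :
    Phi K y α β z ≤ Phi K y α β x + ⟪ContinuousLinearMap.adjoint K (K x - y) + β • x, z - x⟫
      + α * (l1norm z - l1norm x) + (‖K‖ ^ 2 + β) / 2 * ‖z - x‖ ^ 2 := by
  have hK : ‖K (z - x)‖ ^ 2 ≤ ‖K‖ ^ 2 * ‖z - x‖ ^ 2 := by
    rw [← mul_pow]
    gcongr
    exact K.le_opNorm _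
  rw [Phi_eq_add K y α β x z]
  linarith

variable {K y α β}

theorem IsMinimizer.abs_subgradient {x : ltwo} (hα : 0 ≤ α) (hx : IsMinimizer K y α β x)
    (i : ℕ) (r : ℝ) :
    α * |x i| + (-(ContinuousLinearMap.adjoint K (K x - y)) i - β * x i) * (r - x i)
      ≤ α * |r| := by
  set c := (ContinuousLinearMap.adjoint K (K x - y) + β • x) i with hc
  have hperturb :
      ∀ t : ℝ, 0 ≤ c * t + α * (|x i + t| - |x i|) + (‖K‖ ^ 2 + β) / 2 * ‖t‖ ^ 2 := by
    intro t
    have hmin := hx.2 _ (inL1_add_single hx.1 i t)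
    have hle := Phi_le_add K y α β x (x + lp.single 2 i t)
    rw [add_sub_cancel_left, ltwo.inner_single_right, l1norm_add_single hx.1,
      lp.norm_single (by norm_num)] at hle
    linarith
  have hr := (convexOn_mul_add_abs c (x i) hα).nonneg_of_nonneg_add_mul_norm_sq (by simp)
    hperturb (r - x i)
  rw [add_sub_cancel] at hr
  simp only [hc, lp.coeFn_add, lp.coeFn_smul, Pi.add_apply, Pi.smul_apply,
    smul_eq_mul] at hr ⊢
  linarith

theorem isMinimizer_of_abs_subgradient {x : ltwo} (hβ : 0 ≤ β) (hx : inL1 x)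
    (h : ∀ i r, α * |x i| + (-(ContinuousLinearMap.adjoint K (K x - y)) i - β * x i) * (r - x i)
      ≤ α * |r|) :
    IsMinimizer K y α β x := by
  refine ⟨hx, fun z hz => ?_⟩
  have hfirst : 0 ≤ ⟪ContinuousLinearMap.adjoint K (K x - y) + β • x, z - x⟫
      + α * (l1norm z - l1norm x) := by
    rw [inner_add_l1norm_sub_eq_tsum _ _ hx hz]
    refine tsum_nonneg fun i => ?_
    have hi := h i (z i)
    simp only [lp.coeFn_add, lp.coeFn_smul, Pi.add_apply, Pi.smul_apply,
      smul_eq_mul] at hi ⊢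
    linarith
  rw [Phi_eq_add K y α β x z]
  linarith [mul_nonneg hβ (sq_nonneg ‖z - x‖), sq_nonneg ‖K (z - x)‖]

end ElasticNet

/-- Optimality condition for the elastic-net functional: `x` minimizes `Φ_{α,β}` if and
only if `βx = S_α(−K*(Kx − y))` componentwise; equivalently,
`x = S_{α/β}(−K*(Kx − y)/β)` componentwise. -/
theorem elasticNet_minimizer_iff_softShrinkage
    {H : Type*} [NormedAddCommGroup H] [InnerProductSpace ℝ H] [CompleteSpace H]
    (K : ltwo →L[ℝ] H) (y : H) (α β : ℝ) (hα : 0 < α) (hβ : 0 < β) (x : ltwo) :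
    (IsMinimizer K y α β x ↔
      ∀ i : ℕ, β * x i = soft α (-(ContinuousLinearMap.adjoint K (K x - y)) i)) ∧
    (IsMinimizer K y α β x ↔
      ∀ i : ℕ, x i = soft (α / β) (-(ContinuousLinearMap.adjoint K (K x - y)) i / β)) := by
  have hsoft : IsMinimizer K y α β x ↔
      ∀ i : ℕ, β * x i = soft α (-(ContinuousLinearMap.adjoint K (K x - y)) i) := by
    refine ⟨fun hx i => (mul_eq_soft_iff hα.le hβ).2 (hx.abs_subgradient hα.le i), fun h => ?_⟩
    exact isMinimizer_of_abs_subgradient hβ.le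
      (inL1_of_forall_mul_eq_soft (w := -ContinuousLinearMap.adjoint K (K x - y)) hα hβ h)
      fun i => (mul_eq_soft_iff hα.le hβ).1 (h i)
  refine ⟨hsoft, hsoft.trans (forall_congr' fun i => ?_)⟩
  rw [soft_div_div hβ, eq_div_iff hβ.ne', mul_comm]
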